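/- Every coarsely doubling metric space contains a subspace Y of bounded geometry such that the inclusion Y → X is a coarse equivalence; equivalently, every coarsely doubling metric space has a quasi-lattice. -/

import Mathlib

/-!
Take a maximal `4M`-separated subset `Y` of `X`, where `M` is the threshold of coarse doubling.
Maximality makes `Y` `4M`-dense. Iterating the doubling condition, every `R`-ball is covered by
boundedly many `2M`-balls, and each `2M`-ball contains at most one point of the `4M`-separated
set `Y`; hence `Y ∩ B(y, R)` has uniformly bounded cardinality.
-/

/-- `X` is coarsely doubling: there is `M > 0` such that for every `r > M` there is
`n(r) ∈ ℕ` with every `2r`-ball coverable by at most `n(r)` many `r`-balls. -/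
def CoarselyDoubling (X : Type*) [MetricSpace X] : Prop :=
  ∃ M : ℝ, 0 < M ∧ ∀ r : ℝ, M < r → ∃ n : ℕ, ∀ x : X, ∃ F : Finset X,
    F.card ≤ n ∧ Metric.ball x (2 * r) ⊆ ⋃ y ∈ F, Metric.ball y r

open Metric Set

section PseudoMetric

variable {X : Type*} [PseudoMetricSpace X]

theorem exists_pairwise_le_dist_forall_exists_dist_lt {δ : ℝ} (hδ : 0 < δ) :
    ∃ Y : Set X, Y.Pairwise (fun a b => δ ≤ dist a b) ∧ ∀ x, ∃ y ∈ Y, dist x y < δ := by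
  obtain ⟨Y, hY⟩ := zorn_subset {Y : Set X | Y.Pairwise (fun a b => δ ≤ dist a b)}
    fun c hc hchain => ⟨⋃₀ c, hchain.pairwise_sUnion.2 hc, fun _ => subset_sUnion_of_mem⟩
  refine ⟨Y, hY.prop, fun x => ?_⟩
  by_contra! hfar
  have hx : x ∈ Y := hY.mem_of_prop_insert <|
    hY.prop.insert fun y hy _ => ⟨hfar y hy, dist_comm x y ▸ hfar y hy⟩
  exact (hfar x hx).not_gt (by rwa [dist_self])

theorem Set.Pairwise.subsingleton_inter_ball {Y : Set X} {ρ : ℝ}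
    (hY : Y.Pairwise (fun a b => 2 * ρ ≤ dist a b)) (z : X) : (Y ∩ ball z ρ).Subsingleton := by
  rintro a ⟨haY, haz⟩ b ⟨hbY, hbz⟩
  by_contra hab
  have := dist_triangle_right a b z
  linarith [hY haY hbY hab, mem_ball.1 haz, mem_ball.1 hbz]

theorem Finset.set_ncard_biUnion_le_card_of_subsingleton {ι α : Type*} {F : Finset ι}
    {A : ι → Set α} (hA : ∀ i ∈ F, (A i).Subsingleton) : (⋃ i ∈ F, A i).ncard ≤ F.card :=
  calc (⋃ i ∈ F, A i).ncard ≤ ∑ i ∈ F, (A i).ncard := F.set_ncard_biUnion_le A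
    _ ≤ F.card • 1 := F.sum_le_card_nsmul _ 1 fun i hi =>
      (ncard_le_one (hA i hi).finite).2 fun _ ha _ hb => hA i hi ha hb
    _ = F.card := by rw [smul_eq_mul, mul_one]

variable (X) in
def UniformlyCoverable (R r : ℝ) : Prop :=
  ∃ n : ℕ, ∀ x : X, ∃ F : Finset X, F.card ≤ n ∧ ball x R ⊆ ⋃ y ∈ F, ball y r

theorem UniformlyCoverable.refl (r : ℝ) : UniformlyCoverable X r r :=
  ⟨1, fun x => ⟨{x}, by simp, by simp⟩⟩

theorem UniformlyCoverable.mono_left {R R' r : ℝ} (h : UniformlyCoverable X R r) (hR : R' ≤ R) :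
    UniformlyCoverable X R' r := by
  obtain ⟨n, hn⟩ := h
  refine ⟨n, fun x => ?_⟩
  obtain ⟨F, hFcard, hFcov⟩ := hn x
  exact ⟨F, hFcard, (ball_subset_ball hR).trans hFcov⟩

theorem UniformlyCoverable.trans {R s r : ℝ} (h₁ : UniformlyCoverable X R s)
    (h₂ : UniformlyCoverable X s r) : UniformlyCoverable X R r := by
  classical
  obtain ⟨n, hn⟩ := h₁
  obtain ⟨m, hm⟩ := h₂
  choose G hGcard hGcov using hm
  refine ⟨n * m, fun x => ?_⟩
  obtain ⟨F, hFcard, hFcov⟩ := hn x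
  refine ⟨F.biUnion G, ?_, fun z hz => ?_⟩
  · exact (Finset.card_biUnion_le_card_mul F G m fun y _ => hGcard y).trans
      (Nat.mul_le_mul_right m hFcard)
  · obtain ⟨y, hy, hzy⟩ := mem_iUnion₂.1 (hFcov hz)
    obtain ⟨w, hw, hzw⟩ := mem_iUnion₂.1 (hGcov y hzy)
    exact mem_iUnion₂.2 ⟨w, Finset.mem_biUnion.2 ⟨y, hy, hw⟩, hzw⟩

theorem Set.Pairwise.exists_ncard_inter_ball_le {Y : Set X} {R ρ : ℝ}
    (hY : Y.Pairwise (fun a b => 2 * ρ ≤ dist a b)) (hcov : UniformlyCoverable X R ρ) :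
    ∃ K : ℕ, ∀ x : X, (Y ∩ ball x R).Finite ∧ (Y ∩ ball x R).ncard ≤ K := by
  obtain ⟨K, hK⟩ := hcov
  refine ⟨K, fun x => ?_⟩
  obtain ⟨F, hFcard, hFcov⟩ := hK x
  have hsub : Y ∩ ball x R ⊆ ⋃ z ∈ F, Y ∩ ball z ρ := fun w ⟨hwY, hwx⟩ => by
    obtain ⟨z, hz, hwz⟩ := mem_iUnion₂.1 (hFcov hwx)
    exact mem_iUnion₂.2 ⟨z, hz, hwY, hwz⟩
  have hfin : (⋃ z ∈ F, Y ∩ ball z ρ).Finite :=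
    F.finite_toSet.biUnion fun z _ => (hY.subsingleton_inter_ball z).finite
  refine ⟨hfin.subset hsub, ?_⟩
  calc (Y ∩ ball x R).ncard ≤ (⋃ z ∈ F, Y ∩ ball z ρ).ncard := ncard_le_ncard hsub hfin
    _ ≤ F.card := F.set_ncard_biUnion_le_card_of_subsingleton fun z _ =>
      hY.subsingleton_inter_ball z
    _ ≤ K := hFcard

end PseudoMetric

theorem CoarselyDoubling.exists_forall_uniformlyCoverable {X : Type*} [MetricSpace X]
    (h : CoarselyDoubling X) : ∃ M > 0, ∀ r > M, ∀ R, UniformlyCoverable X R r := by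
  obtain ⟨M, hM, hdouble⟩ := h
  refine ⟨M, hM, fun r hr R => ?_⟩
  have hpow : ∀ k : ℕ, UniformlyCoverable X (2 ^ k * r) r := by
    intro k
    induction k with
    | zero => simpa using UniformlyCoverable.refl r
    | succ k ih =>
      have hk : M < 2 ^ k * r := hr.trans_le (le_mul_of_one_le_left (by linarith)
        (one_le_pow₀ one_le_two))
      refine UniformlyCoverable.trans ?_ ih
      rw [pow_succ, mul_right_comm, mul_comm _ 2]
      exact hdouble _ hk
  obtain ⟨k, hk⟩ := pow_unbounded_of_one_lt (R / r) one_lt_two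
  exact (hpow k).mono_left ((div_le_iff₀ (hM.trans hr)).1 hk.le)

theorem stmt_12 {X : Type*} [MetricSpace X] (h : CoarselyDoubling X) :
    ∃ Y : Set X,
      (∃ c : ℝ, 0 < c ∧ ∀ x : X, ∃ y ∈ Y, dist x y < c) ∧
      (∀ r : ℝ, 0 < r → ∃ K : ℕ, ∀ y ∈ Y,
        (Y ∩ Metric.ball y r).Finite ∧ (Y ∩ Metric.ball y r).ncard ≤ K) := by
  obtain ⟨M, hM, hcov⟩ := h.exists_forall_uniformlyCoverable
  obtain ⟨Y, hsep, hdense⟩ :=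
    exists_pairwise_le_dist_forall_exists_dist_lt (X := X) (δ := 2 * (2 * M)) (by positivity)
  refine ⟨Y, ⟨_, by positivity, hdense⟩, fun R _ => ?_⟩
  obtain ⟨K, hK⟩ := hsep.exists_ncard_inter_ball_le (hcov (2 * M) (by linarith) R)
  exact ⟨K, fun y _ => hK y⟩
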